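/- Let V be a finite-dimensional real symplectic vector space and B ⊆ V a Borel set such that W := Inv_V(B) = {v ∈ V | B + rv = B for all r ∈ ℝ} is coisotropic. Let f₁,...,f_k be a basis of W^⊥ and define S := {(σ(f₁,v),...,σ(f_k,v)) | v ∈ B} ⊆ ℝ^k. Then B = C_{f₁,...,f_k}(S) := {v ∈ V | (σ(f₁,v),...,σ(f_k,v)) ∈ S}. -/

import Mathlib

open Module

/-- The symplectic orthogonal complement `W^⊥ = {f ∈ V | σ(f,g) = 0 for all g ∈ W}`. -/
def sympOrth {V : Type*} [AddCommGroup V] [Module ℝ V]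
    (σ : V →ₗ[ℝ] V →ₗ[ℝ] ℝ) (W : Submodule ℝ V) : Submodule ℝ V where
  carrier := {f | ∀ g ∈ W, σ f g = 0}
  zero_mem' := by intro g hg; simp
  add_mem' := by intro a b ha hb g hg; simp [ha g hg, hb g hg]
  smul_mem' := by intro c a ha g hg; simp [ha g hg]

/-- The invariance group `Inv(B) = {v | B + rv = B for all r ∈ ℝ}` of a subset `B` of a
real vector space. -/
def InvSet {M : Type*} [AddCommGroup M] [Module ℝ M] (B : Set M) : Set M :=
  {v | ∀ r : ℝ, (fun x => x + r • v) '' B = B}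

/-!
If `v` and some `v' ∈ B` have the same values `σ(f_j, ·)`, then `v - v'` is σ-orthogonal to
`W^⊥`, hence lies in `(W^⊥)^⊥ = W = Inv(B)`, and translating `v'` by it stays in `B`.
-/

theorem add_mem_of_mem_invSet {M : Type*} [AddCommGroup M] [Module ℝ M] {B : Set M} {v x : M}
    (hv : v ∈ InvSet B) (hx : x ∈ B) : x + v ∈ B := by
  rw [← hv 1]
  exact ⟨x, hx, by rw [one_smul]⟩

section

variable {V : Type*} [AddCommGroup V] [Module ℝ V]

theorem mem_sympOrth_iff_forall_basis {ι : Type*} (τ : V →ₗ[ℝ] V →ₗ[ℝ] ℝ) {U : Submodule ℝ V}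
    (b : Basis ι ℝ U) {x : V} : x ∈ sympOrth τ U ↔ ∀ i, τ x (b i) = 0 := by
  refine ⟨fun hx i => hx _ (b i).2, fun hb g hg => ?_⟩
  have hzero : (τ x).comp U.subtype = 0 := b.ext hb
  exact LinearMap.congr_fun hzero ⟨g, hg⟩

theorem sympOrth_eq_comap_dualAnnihilator (σ : V →ₗ[ℝ] V →ₗ[ℝ] ℝ) (W : Submodule ℝ V) :
    sympOrth σ W = W.dualAnnihilator.comap σ := by
  ext f
  simp only [Submodule.mem_comap, Submodule.mem_dualAnnihilator]
  rfl

theorem sympOrth_flip_eq_dualCoannihilator_map (σ : V →ₗ[ℝ] V →ₗ[ℝ] ℝ) (U : Submodule ℝ V) :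
    sympOrth σ.flip U = (U.map σ).dualCoannihilator := by
  ext x
  rw [Submodule.mem_dualCoannihilator]
  exact ⟨fun hx _ ⟨f, hf, hφ⟩ => hφ ▸ hx f hf, fun hx f hf => hx _ ⟨f, hf, rfl⟩⟩

/-- In finite dimension nondegeneracy makes `σ : V → V*` bijective, so the double orthogonal
is the double annihilator. -/
theorem sympOrth_flip_sympOrth [FiniteDimensional ℝ V] {σ : V →ₗ[ℝ] V →ₗ[ℝ] ℝ}
    (hnd : ∀ v, (∀ w, σ v w = 0) → v = 0) (W : Submodule ℝ V) :
    sympOrth σ.flip (sympOrth σ W) = W := by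
  have hinj : Function.Injective σ := by
    rw [← LinearMap.ker_eq_bot, Submodule.eq_bot_iff]
    exact fun v hv => hnd v (LinearMap.congr_fun hv)
  have hsurj : Function.Surjective σ :=
    (LinearMap.injective_iff_surjective_of_finrank_eq_finrank Subspace.dual_finrank_eq.symm).1 hinj
  rw [sympOrth_flip_eq_dualCoannihilator_map, sympOrth_eq_comap_dualAnnihilator,
    Submodule.map_comap_eq_of_surjective hsurj, Subspace.dualAnnihilator_dualCoannihilator_eq]

end

theorem observable_set_eq_C_of_coisotropic_inv
    {V : Type*} [AddCommGroup V] [Module ℝ V] [FiniteDimensional ℝ V]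
    (σ : V →ₗ[ℝ] V →ₗ[ℝ] ℝ)
    (hnd : ∀ v, (∀ w, σ v w = 0) → v = 0)
    (B : Set V)
    (W : Submodule ℝ V) (hW : (↑W : Set V) = InvSet B)
    (k : ℕ) (b : Basis (Fin k) ℝ ↥(sympOrth σ W)) :
    B = {v : V | (fun j => σ ((b j : V)) v)
          ∈ {y : Fin k → ℝ | ∃ v' ∈ B, y = fun j => σ ((b j : V)) v'}} := by
  ext v
  refine ⟨fun hv => ⟨v, hv, rfl⟩, ?_⟩
  rintro ⟨v', hv', hy⟩
  have hsub : v - v' ∈ sympOrth σ.flip (sympOrth σ W) :=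
    (mem_sympOrth_iff_forall_basis σ.flip b).2 fun j => by
      simp [congrFun hy j]
  rw [sympOrth_flip_sympOrth hnd, ← SetLike.mem_coe, hW] at hsub
  simpa using add_mem_of_mem_invSet hsub hv'
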